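/- Let S_{st} be a partition attaining the st-MinCut and let u, v ∈ S_{st} be distinct, with S_{uv} a partition attaining the uv-MinCut. If t ∉ S_{uv}, then S_{st} ∩ S_{uv} is also a partition attaining the uv-MinCut; and if t ∈ S_{uv}, then S_{st} ∩ (V \ S_{uv}) is also a partition attaining the uv-MinCut. -/
import Mathlib


open Finset

noncomputable def cutW {V : Type*} [Fintype V] [DecidableEq V] (w : V → V → ℝ) (S : Finset V) : ℝ :=
  ∑ i ∈ S, ∑ j ∈ Sᶜ, w i j

noncomputable def minCutVal {V : Type*} [Fintype V] [DecidableEq V] (w : V → V → ℝ) (s t : V) : ℝ :=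
  sInf {c : ℝ | ∃ S : Finset V, s ∈ S ∧ t ∉ S ∧ cutW w S = c}

noncomputable def cW {V : Type*} (w : V → V → ℝ) (A B : Finset V) : ℝ :=
  ∑ i ∈ A, ∑ j ∈ B, w i j

noncomputable def volW {V : Type*} [Fintype V] (w : V → V → ℝ) (S : Finset V) : ℝ :=
  ∑ i ∈ S, ∑ j, w i j

lemma cutW_expand {V : Type*} [Fintype V] [DecidableEq V] (w : V → V → ℝ) (S : Finset V) :
    cutW w S = ∑ i, ∑ j, (if i ∈ S ∧ j ∉ S then w i j else 0) := by
  unfold cutW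
  have h : ∀ (T : Finset V) (f : V → ℝ), ∑ i ∈ T, f i = ∑ i, if i ∈ T then f i else 0 := by
    intro T f
    rw [Finset.sum_ite_mem, Finset.univ_inter]
  rw [h S]
  apply Finset.sum_congr rfl
  intro i _
  by_cases hi : i ∈ S
  · rw [if_pos hi, h Sᶜ]
    apply Finset.sum_congr rfl
    intro j _
    by_cases hj : j ∈ S <;> simp [hi, hj]
  · simp [hi]

lemma cutW_submod {V : Type*} [Fintype V] [DecidableEq V] (w : V → V → ℝ)
    (hnn : ∀ i j, 0 ≤ w i j) (A B : Finset V) :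
    cutW w (A ∩ B) + cutW w (A ∪ B) ≤ cutW w A + cutW w B := by
  simp only [cutW_expand, ← Finset.sum_add_distrib]
  apply Finset.sum_le_sum
  intro i _
  apply Finset.sum_le_sum
  intro j _
  by_cases hiA : i ∈ A <;> by_cases hiB : i ∈ B <;>
    by_cases hjA : j ∈ A <;> by_cases hjB : j ∈ B <;>
    simp [Finset.mem_inter, Finset.mem_union, hiA, hiB, hjA, hjB, hnn i j]

lemma cutW_compl {V : Type*} [Fintype V] [DecidableEq V] (w : V → V → ℝ)
    (hsymm : ∀ i j, w i j = w j i) (S : Finset V) :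
    cutW w Sᶜ = cutW w S := by
  unfold cutW
  rw [compl_compl, Finset.sum_comm]
  exact Finset.sum_congr rfl fun i _ => Finset.sum_congr rfl fun j _ => hsymm j i

/-- noncrossing uv-MinCut inside an st-MinCut partition. -/
theorem stmt2 {V : Type*} [Fintype V] [DecidableEq V] (w : V → V → ℝ)
    (hnn : ∀ i j, 0 ≤ w i j) (hsymm : ∀ i j, w i j = w j i)
    (s t u v : V) (hst : s ≠ t) (huv : u ≠ v)
    (Sst Suv : Finset V)
    (hsS : s ∈ Sst) (htS : t ∉ Sst)
    (hSstMin : ∀ T : Finset V, s ∈ T → t ∉ T → cutW w Sst ≤ cutW w T)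
    (huSst : u ∈ Sst) (hvSst : v ∈ Sst)
    (huS : u ∈ Suv) (hvS : v ∉ Suv)
    (hSuvMin : ∀ T : Finset V, u ∈ T → v ∉ T → cutW w Suv ≤ cutW w T) :
    (t ∉ Suv → u ∈ Sst ∩ Suv ∧ v ∉ Sst ∩ Suv ∧ cutW w (Sst ∩ Suv) = cutW w Suv) ∧
    (t ∈ Suv → v ∈ Sst ∩ Suvᶜ ∧ u ∉ Sst ∩ Suvᶜ ∧ cutW w (Sst ∩ Suvᶜ) = cutW w Suv) := by
  constructor
  · intro htSuv
    refine ⟨Finset.mem_inter.2 ⟨huSst, huS⟩, by simp [Finset.mem_inter, hvS], ?_⟩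
    have h1 : cutW w Suv ≤ cutW w (Sst ∩ Suv) :=
      hSuvMin _ (Finset.mem_inter.2 ⟨huSst, huS⟩) (by simp [Finset.mem_inter, hvS])
    have h2 : cutW w Sst ≤ cutW w (Sst ∪ Suv) :=
      hSstMin _ (Finset.mem_union_left _ hsS) (by simp [Finset.mem_union, htS, htSuv])
    have h3 := cutW_submod w hnn Sst Suv
    linarith
  · intro htSuv
    refine ⟨Finset.mem_inter.2 ⟨hvSst, Finset.mem_compl.2 hvS⟩,
      by simp [Finset.mem_inter, huS], ?_⟩
    have hu' : u ∈ (Sst ∩ Suvᶜ)ᶜ := by simp [Finset.mem_inter, huS]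
    have hv' : v ∉ (Sst ∩ Suvᶜ)ᶜ := by
      simp [Finset.mem_inter, hvSst, hvS]
    have h1 : cutW w Suv ≤ cutW w (Sst ∩ Suvᶜ) := by
      calc cutW w Suv ≤ cutW w ((Sst ∩ Suvᶜ)ᶜ) := hSuvMin _ hu' hv'
        _ = cutW w (Sst ∩ Suvᶜ) := cutW_compl w hsymm _
    have h2 : cutW w Sst ≤ cutW w (Sst ∪ Suvᶜ) :=
      hSstMin _ (Finset.mem_union_left _ hsS) (by simp [Finset.mem_union, htS, htSuv])
    have h3 := cutW_submod w hnn Sst Suvᶜ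
    have h4 : cutW w Suvᶜ = cutW w Suv := cutW_compl w hsymm _
    linarith
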